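/- arXiv:1702.00787 — 3 statements merged into one kernel-verified Lean document; each statement's English description precedes it below -/
import Mathlib

section
/- For every real W ≥ 2 there is an instance of the multiple knapsack problem on which the simple greedy algorithm (highest ratio item to largest-capacity knapsack) achieves total profit whose ratio to the optimum profit equals 2/W; hence the simple greedy algorithm has no constant-factor approximation guarantee. -/
/-!
A single knapsack of capacity `W` with the items `(2, 1)` and `(W, W)` already does it: greedy
packs the ratio-2 item first, which leaves room `W - 1 < W`, so it earns `2`, while packing the big
item alone earns `W`. Letting `W → ∞` rules out every constant factor.
-/

/-- Index (smallest, by convention) of a knapsack with maximal remaining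
capacity among those in which an item of weight `w` fits, if any. -/
noncomputable def pick {n : ℕ} (r : Fin n → ℝ) (w : ℝ) : Option (Fin n) :=
  (List.finRange n).find? (fun j => decide (w ≤ r j ∧ ∀ j' : Fin n, w ≤ r j' → r j' ≤ r j))

/-- Total profit of the simple greedy algorithm: items are processed in order
(assumed sorted by nonincreasing ratio), each assigned to the knapsack of
largest remaining capacity in which it fits, if any. -/
noncomputable def greedyProfit {n : ℕ} : List (ℝ × ℝ) → (Fin n → ℝ) → ℝ
  | [], _ => 0
  | (c, w) :: rest, r =>
    match pick r w with
    | none => greedyProfit rest r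
    | some j => c + greedyProfit rest (Function.update r j (r j - w))

/-- The per-item assignment produced by the simple greedy algorithm. -/
noncomputable def greedyAssign {n : ℕ} : List (ℝ × ℝ) → (Fin n → ℝ) → List (Option (Fin n))
  | [], _ => []
  | (_, w) :: rest, r =>
    match pick r w with
    | none => none :: greedyAssign rest r
    | some j => some j :: greedyAssign rest (Function.update r j (r j - w))

/-- A feasible assignment of items to knapsacks: the total weight in each
knapsack does not exceed its capacity (each item goes to at most one knapsack
since the assignment is a function). -/
def FeasibleAssign {n : ℕ} (W : Fin n → ℝ) (items : List (ℝ × ℝ))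
    (a : Fin items.length → Option (Fin n)) : Prop :=
  ∀ j : Fin n, ∑ i ∈ Finset.univ.filter (fun i => a i = some j), (items.get i).2 ≤ W j

/-- Total profit of an assignment: sum of costs of assigned items. -/
def assignProfit {n : ℕ} (items : List (ℝ × ℝ)) (a : Fin items.length → Option (Fin n)) : ℝ :=
  ∑ i ∈ Finset.univ.filter (fun i => a i ≠ none), (items.get i).1

/-- Items sorted in nonincreasing order of cost/weight ratio. -/
def SortedByRatio (items : List (ℝ × ℝ)) : Prop :=
  items.Pairwise (fun p q => q.1 / q.2 ≤ p.1 / p.2)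

lemma pick_fin_one (r : Fin 1 → ℝ) (w : ℝ) :
    pick r w = if w ≤ r 0 then some 0 else none := by
  by_cases h : w ≤ r 0 <;> simp [pick, h, List.finRange_succ, Fin.forall_fin_one]

lemma Option.eq_none_or_eq_some_zero (o : Option (Fin 1)) : o = none ∨ o = some 0 := by
  rcases o with _ | j
  · exact .inl rfl
  · exact .inr (congrArg some (Subsingleton.elim j 0))

def feasibleProfits {n : ℕ} (cap : Fin n → ℝ) (items : List (ℝ × ℝ)) : Set ℝ :=
  {v | ∃ a : Fin items.length → Option (Fin n),
    FeasibleAssign cap items a ∧ assignProfit items a = v}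

lemma sortedByRatio_trap {W : ℝ} (hW : 2 ≤ W) : SortedByRatio [(2, 1), (W, W)] := by
  simp [SortedByRatio, div_self (by linarith : W ≠ 0)]

lemma greedyProfit_trap {W : ℝ} (hW : 1 ≤ W) :
    greedyProfit [(2, 1), (W, W)] (fun _ : Fin 1 => W) = 2 := by
  norm_num [greedyProfit, pick_fin_one, hW]

lemma isGreatest_feasibleProfits_trap {W : ℝ} (hW : 2 ≤ W) :
    IsGreatest (feasibleProfits (fun _ : Fin 1 => W) [(2, 1), (W, W)]) W := by
  refine ⟨⟨![none, some 0], fun j => ?_, ?_⟩, ?_⟩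
  · simp [Fin.fin_one_eq_zero j, Finset.sum_filter, Fin.sum_univ_two]
  · simp [assignProfit, Finset.sum_filter, Fin.sum_univ_two]
  · rintro v ⟨a, hfeas, rfl⟩
    have hweight := hfeas 0
    simp only [assignProfit, Finset.sum_filter] at hweight ⊢
    rcases (a 0).eq_none_or_eq_some_zero with h0 | h0 <;>
      rcases (a 1).eq_none_or_eq_some_zero with h1 | h1 <;>
      simp [h0, h1] at hweight ⊢ <;> linarith

lemma exists_instance_greedy_ratio {W : ℝ} (hW : 2 ≤ W) :
    ∃ (n : ℕ), 0 < n ∧ ∃ (items : List (ℝ × ℝ)) (cap : Fin n → ℝ) (opt : ℝ),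
      SortedByRatio items ∧ IsGreatest (feasibleProfits cap items) opt ∧ 0 < opt ∧
      greedyProfit items cap / opt = 2 / W :=
  ⟨1, one_pos, [(2, 1), (W, W)], fun _ => W, W, sortedByRatio_trap hW,
    isGreatest_feasibleProfits_trap hW, by linarith, by rw [greedyProfit_trap (by linarith)]⟩

/-- For every `W ≥ 2` there is an instance on which the simple greedy
algorithm achieves exactly a `2 / W` fraction of the optimum profit; hence
for every `ρ > 0` there is an instance on which greedy gets less than
`ρ` times the optimum, i.e. no constant-factor guarantee holds. -/
theorem stmt1 :
    (∀ W : ℝ, 2 ≤ W →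
      ∃ (n : ℕ), 0 < n ∧ ∃ (items : List (ℝ × ℝ)) (cap : Fin n → ℝ) (opt : ℝ),
        SortedByRatio items ∧
        IsGreatest {v : ℝ | ∃ a : Fin items.length → Option (Fin n),
          FeasibleAssign cap items a ∧ assignProfit items a = v} opt ∧
        0 < opt ∧
        greedyProfit items cap / opt = 2 / W) ∧
    (∀ ρ : ℝ, 0 < ρ →
      ∃ (n : ℕ), 0 < n ∧ ∃ (items : List (ℝ × ℝ)) (cap : Fin n → ℝ) (opt : ℝ),
        SortedByRatio items ∧
        IsGreatest {v : ℝ | ∃ a : Fin items.length → Option (Fin n),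
          FeasibleAssign cap items a ∧ assignProfit items a = v} opt ∧
        0 < opt ∧
        greedyProfit items cap < ρ * opt) := by
  refine ⟨fun W hW => exists_instance_greedy_ratio hW, fun ρ hρ => ?_⟩
  set W := max 2 (3 / ρ)
  have hW : 2 ≤ W := le_max_left _ _
  have hρW : 2 / W < ρ := by
    rw [div_lt_iff₀ (by linarith)]
    linarith [(div_le_iff₀ hρ).mp (le_max_right 2 (3 / ρ))]
  obtain ⟨n, hn, items, cap, opt, hsorted, hopt, hpos, hratio⟩ := exists_instance_greedy_ratio hW
  refine ⟨n, hn, items, cap, opt, hsorted, hopt, hpos, ?_⟩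
  rw [div_eq_iff hpos.ne'] at hratio
  rw [hratio]
  exact mul_lt_mul_of_pos_right hρW hpos
end

section
/- In the instance with n knapsacks of capacity W ≥ 2, n items with (cost, weight) = (2,1), and n items with (cost, weight) = (W, W), the optimal solution of the multiple knapsack problem has total profit at least nW (achieved by placing one (W,W)-item in each knapsack), while the greedy-by-ratio solution that places the (2,1)-items first achieves profit 2n. -/
/-!
Greedy puts one (2,1)-item into each knapsack; the remaining capacity `W - 1 < W` then rejects
every (W,W)-item, so greedy earns `2n`. Placing the `j`-th (W,W)-item alone in knapsack `j` is
feasible and earns `nW`.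
-/

section Pick

variable {n : ℕ} {r : Fin n → ℝ} {w : ℝ}

lemma pick_eq_none (h : ∀ j, r j < w) : pick r w = none :=
  List.find?_eq_none.2 fun j _ => by simp [(h j).not_ge]

lemma pick_eq_some {k : Fin n} (hfit : w ≤ r k) (hmax : ∀ j, r j ≤ r k)
    (hfirst : ∀ j < k, r j < r k) : pick r w = some k := by
  refine List.find?_eq_some_iff_getElem.2
    ⟨by simpa using ⟨hfit, fun j _ => hmax j⟩, k, by simp, by simp, fun i hi => ?_⟩
  simp only [List.getElem_finRange, Bool.not_eq_eq_eq_not, Bool.not_true, decide_eq_false_iff_not,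
    not_and, not_forall]
  intro _
  exact ⟨k, hfit, (hfirst _ (Fin.mk_lt_of_lt_val hi)).not_ge⟩

end Pick

section Greedy

variable {n : ℕ}

/-- Remaining capacities when the first `k` of `n` knapsacks of capacity `W` each hold weight `w`. -/
def prefixLoaded (W w : ℝ) (k : ℕ) : Fin n → ℝ := fun j => if (j : ℕ) < k then W - w else W

lemma greedyProfit_eq_zero_of_forall_lt {r : Fin n → ℝ} :
    ∀ {items : List (ℝ × ℝ)}, (∀ p ∈ items, ∀ j, r j < p.2) → greedyProfit items r = 0
  | [], _ => rfl
  | (_, _) :: rest, h => by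
    rw [greedyProfit, pick_eq_none (h _ List.mem_cons_self)]
    exact greedyProfit_eq_zero_of_forall_lt fun p hp => h p (List.mem_cons_of_mem _ hp)

variable {W w : ℝ}

lemma pick_prefixLoaded (hw : 0 < w) (hwW : w ≤ W) {k : ℕ} (hk : k < n) :
    pick (prefixLoaded W w k) w = some ⟨k, hk⟩ := by
  apply pick_eq_some
  · simpa [prefixLoaded] using hwW
  · intro j; simp only [prefixLoaded]; split_ifs <;> linarith
  · intro j hj
    simp only [prefixLoaded, Fin.lt_def] at hj ⊢
    simp [hj, hw]

lemma update_prefixLoaded {k : ℕ} (hk : k < n) :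
    Function.update (prefixLoaded W w k) ⟨k, hk⟩ (prefixLoaded W w k ⟨k, hk⟩ - w) =
      prefixLoaded W w (k + 1) := by
  funext j
  by_cases hj : j = ⟨k, hk⟩
  · subst hj
    simp [prefixLoaded]
  · have hjk : (j : ℕ) ≠ k := fun h => hj (Fin.ext h)
    rw [Function.update_of_ne hj]
    simp only [prefixLoaded]
    split_ifs <;> first | rfl | omega

lemma greedyProfit_replicate_append (hw : 0 < w) (hwW : w ≤ W) (c : ℝ) (rest : List (ℝ × ℝ)) :
    ∀ m k : ℕ, k + m ≤ n →
      greedyProfit (List.replicate m (c, w) ++ rest) (prefixLoaded (n := n) W w k) =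
        m * c + greedyProfit rest (prefixLoaded (n := n) W w (k + m))
  | 0, k, _ => by simp
  | m + 1, k, hkm => by
    have hk : k < n := by omega
    rw [List.replicate_succ, List.cons_append, greedyProfit, pick_prefixLoaded hw hwW hk]
    simp only [update_prefixLoaded hk,
      greedyProfit_replicate_append hw hwW c rest m (k + 1) (by omega)]
    rw [show k + 1 + m = k + (m + 1) by omega]
    push_cast
    ring

end Greedy

lemma exists_feasibleAssign_append_replicate {n : ℕ} (pre : List (ℝ × ℝ)) (c w : ℝ)
    (cap : Fin n → ℝ) (hcap : ∀ j, w ≤ cap j) :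
    ∃ a : Fin (pre ++ List.replicate n (c, w)).length → Option (Fin n),
      FeasibleAssign cap (pre ++ List.replicate n (c, w)) a ∧
        assignProfit (pre ++ List.replicate n (c, w)) a = n * c := by
  set items := pre ++ List.replicate n (c, w)
  have hlen : items.length = pre.length + n := by simp [items]
  let e : Fin n ↪ Fin items.length :=
    ⟨fun j => ⟨pre.length + j, by omega⟩, fun j j' h => Fin.ext (by simpa [Fin.ext_iff] using h)⟩
  have he_val : ∀ j, (e j : ℕ) = pre.length + j := fun _ => rfl
  have he : ∀ j, items.get (e j) = (c, w) := fun j => by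
    show items[pre.length + (j : ℕ)] = _
    simp [items, List.getElem_append_right]
  let a : Fin items.length → Option (Fin n) := fun i =>
    if h : pre.length ≤ i then some ⟨i - pre.length, by omega⟩ else none
  have ha : ∀ i j, a i = some j ↔ i = e j := fun i j => by
    simp only [a, Fin.ext_iff, he_val]
    split_ifs <;> simp [Fin.ext_iff] <;> omega
  have hsome : ∀ j, Finset.univ.filter (fun i => a i = some j) = {e j} := fun j => by
    ext i; simp [ha]
  have hassigned : Finset.univ.filter (fun i => a i ≠ none) = Finset.univ.map e := by
    ext i
    simp only [Finset.mem_filter, Finset.mem_univ, true_and, Finset.mem_map,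
      Option.ne_none_iff_exists', ha, eq_comm]
  refine ⟨a, fun j => ?_, ?_⟩
  · rw [hsome, Finset.sum_singleton, he]
    exact hcap j
  · rw [assignProfit, hassigned, Finset.sum_map]
    simp only [he, Finset.sum_const, Finset.card_univ, Fintype.card_fin, nsmul_eq_mul]

theorem stmt2_general (n : ℕ) (W : ℝ) (hW : 2 ≤ W) :
    let items := List.replicate n ((2 : ℝ), (1 : ℝ)) ++ List.replicate n (W, W)
    let cap : Fin n → ℝ := fun _ => W
    (∃ a : Fin items.length → Option (Fin n),
      FeasibleAssign cap items a ∧ assignProfit items a = n * W) ∧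
    greedyProfit items cap = 2 * n := by
  intro items cap
  refine ⟨exists_feasibleAssign_append_replicate _ W W cap fun _ => le_rfl, ?_⟩
  have hcap : cap = prefixLoaded W 1 0 := by
    funext j
    simp [cap, prefixLoaded]
  have hheavy : greedyProfit (List.replicate n (W, W)) (prefixLoaded (n := n) W 1 n) = 0 :=
    greedyProfit_eq_zero_of_forall_lt fun p hp j => by
      simp [List.eq_of_mem_replicate hp, prefixLoaded, j.isLt]
  rw [hcap, greedyProfit_replicate_append one_pos (by linarith) 2 _ n 0 (by omega), zero_add,
    hheavy]
  ring

/-- On the instance with `n` knapsacks of capacity `W ≥ 2`, `n` items of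
(cost, weight) = (2, 1) and `n` items of (cost, weight) = (W, W), the optimum
achieves total profit `n * W` (one (W,W)-item per knapsack), while the
greedy-by-ratio solution, which places the (2,1)-items first, achieves
total profit `2 * n`. -/
theorem stmt2 (n : ℕ) (hn : 0 < n) (W : ℝ) (hW : 2 ≤ W) :
    let items := List.replicate n ((2 : ℝ), (1 : ℝ)) ++ List.replicate n (W, W)
    let cap : Fin n → ℝ := fun _ => W
    (∃ a : Fin items.length → Option (Fin n),
      FeasibleAssign cap items a ∧ assignProfit items a = n * W) ∧
    greedyProfit items cap = 2 * n :=
  stmt2_general n W hW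
end

section
/- For the multiple knapsack problem with n knapsacks, the modified greedy algorithm—take for the whole system the better of the greedy-by-ratio assignment and the single most profitable unassigned item that fits in some knapsack—achieves total profit at least 1/(n+1) times the optimum. -/
/-!
Let `t` be the first item that an optimal assignment packs but greedy does not, and `ρ` its
cost/weight ratio. Items packed by the optimum from `t` on have ratio at most `ρ`, items packed by
greedy before `t` have ratio at least `ρ`, so exchanging one set for the other bounds the optimum
by greedy's profit on that prefix plus `ρ` times the capacity greedy left free when it reached `t`.
As `t` then fits in no knapsack, that free capacity is less than `n` times its weight, and the
optimum is at most greedy's profit plus `n` times the cost of `t`. If there is no such `t`, greedy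
packs everything the optimum packs.
-/

open Finset

theorem sum_le_sum_add_mul_sub_sum {ι : Type*} [DecidableEq ι] {A S : Finset ι} {c w : ι → ℝ}
    {ρ C : ℝ} (hρ : 0 ≤ ρ) (hA : ∀ i ∈ A \ S, c i ≤ ρ * w i) (hS : ∀ i ∈ S \ A, ρ * w i ≤ c i)
    (hC : ∑ i ∈ A, w i ≤ C) :
    ∑ i ∈ A, c i ≤ ∑ i ∈ S, c i + ρ * (C - ∑ i ∈ S, w i) := by
  rw [← sum_inter_add_sum_sdiff A S] at hC ⊢
  rw [← sum_inter_add_sum_sdiff S A, ← sum_inter_add_sum_sdiff S A, inter_comm S A]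
  have hAc : ∑ i ∈ A \ S, c i ≤ ρ * ∑ i ∈ A \ S, w i := by
    rw [mul_sum]; exact sum_le_sum hA
  have hSc : ρ * ∑ i ∈ S \ A, w i ≤ ∑ i ∈ S \ A, c i := by
    rw [mul_sum]; exact sum_le_sum hS
  linarith [mul_le_mul_of_nonneg_left hC hρ]

theorem sum_sum_filter_eq_some {ι κ M : Type*} [Fintype κ] [DecidableEq κ] [AddCommMonoid M]
    (s : Finset ι) (a : ι → Option κ) (f : ι → M) :
    ∑ j, ∑ i ∈ s with a i = some j, f i = ∑ i ∈ s with a i ≠ none, f i := by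
  rw [sum_comm' (t' := s.filter (a · ≠ none)) (s' := fun i => univ.filter (a i = some ·))]
  · refine sum_congr rfl fun i hi => ?_
    obtain ⟨j, hj⟩ := Option.ne_none_iff_exists'.mp (mem_filter.mp hi).2
    simp [hj, filter_eq]
  · intro j i
    simp only [mem_filter, mem_univ, true_and]
    aesop

theorem SortedByRatio.antitone {items : List (ℝ × ℝ)} (h : SortedByRatio items) :
    Antitone fun i : Fin items.length => (items.get i).1 / (items.get i).2 := by
  intro i j hij
  rcases hij.lt_or_eq with hij | rfl
  · exact List.pairwise_iff_get.mp h i j hij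
  · exact le_rfl

variable {n : ℕ}

theorem lt_of_pick_eq_none {r : Fin n → ℝ} {w : ℝ} (h : pick r w = none) (j : Fin n) :
    r j < w := by
  by_contra! hj
  obtain ⟨j₀, -, hj₀⟩ := exists_max_image univ r ⟨j, mem_univ j⟩
  rw [pick, List.find?_eq_none] at h
  exact h j₀ (List.mem_finRange j₀)
    (by simpa using ⟨hj.trans (hj₀ j (mem_univ j)), fun j' _ => hj₀ j' (mem_univ j')⟩)

theorem greedyProfit_eq_sum (l : List (ℝ × ℝ)) (r : Fin n → ℝ) :
    greedyProfit l r =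
      ∑ i with (greedyAssign l r).getD (i : Fin l.length) none ≠ none, (l.get i).1 := by
  induction l generalizing r with
  | nil => simp [greedyProfit]
  | cons p l ih =>
    obtain ⟨c, w⟩ := p
    rw [sum_filter]
    erw [Fin.sum_univ_succ (n := l.length)]
    cases h : pick r w <;> simp [greedyProfit, greedyAssign, h, ih, sum_filter]

-- The left side is the capacity of knapsack `j` left free when greedy reaches item `t`.
theorem sub_sum_lt_of_greedyAssign_eq_none (l : List (ℝ × ℝ)) (r : Fin n → ℝ) (t : Fin l.length)
    (ht : (greedyAssign l r).getD t none = none) (j : Fin n) :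
    r j - ∑ i with i < t ∧ (greedyAssign l r).getD i none = some j, (l.get i).2
      < (l.get t).2 := by
  induction l generalizing r with
  | nil => exact t.elim0
  | cons p l ih =>
    obtain ⟨c, w⟩ := p
    rw [sum_filter]
    erw [Fin.sum_univ_succ (n := l.length)]
    cases t using Fin.cases with
    | zero =>
      have : pick r w = none := by cases h : pick r w <;> simp_all [greedyAssign]
      simpa using lt_of_pick_eq_none this j
    | succ s =>
      cases h : pick r w with
      | none =>
        have := ih r s (by simpa [greedyAssign, h] using ht)
        simpa [greedyAssign, h, sum_filter] using this
      | some j₀ =>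
        have := ih _ s (by simpa [greedyAssign, h] using ht)
        have hupd : Function.update r j₀ (r j₀ - w) j = r j - if j₀ = j then w else 0 := by
          rcases eq_or_ne j₀ j with rfl | hj
          · simp
          · simp [Function.update_of_ne hj.symm, hj]
        simpa [greedyAssign, h, sum_filter, hupd, sub_add_eq_sub_sub] using this

namespace FeasibleAssign

variable {W : Fin n → ℝ} {items : List (ℝ × ℝ)} {a : Fin items.length → Option (Fin n)}

theorem sum_snd_le (ha : FeasibleAssign W items a) :
    ∑ i with a i ≠ none, (items.get i).2 ≤ ∑ j, W j := by
  rw [← sum_sum_filter_eq_some]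
  exact sum_le_sum fun j _ => ha j

theorem snd_le_of_eq_some (ha : FeasibleAssign W items a) (hw : ∀ p ∈ items, 0 ≤ p.2)
    {i : Fin items.length} {j : Fin n} (hij : a i = some j) : (items.get i).2 ≤ W j :=
  (single_le_sum (fun i _ => hw _ (List.get_mem items i)) (mem_filter.mpr ⟨mem_univ i, hij⟩)).trans
    (ha j)

end FeasibleAssign

theorem assignProfit_le_greedyProfit_add_of_first_unassigned {W : Fin n → ℝ}
    {items : List (ℝ × ℝ)} (hpos : ∀ p ∈ items, 0 < p.1 ∧ 0 < p.2) (hsorted : SortedByRatio items)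
    {a : Fin items.length → Option (Fin n)} (ha : FeasibleAssign W items a) {t : Fin items.length}
    (ht : (greedyAssign items W).getD t none = none)
    (hfirst : ∀ i < t, a i ≠ none → (greedyAssign items W).getD i none ≠ none) :
    assignProfit items a ≤ greedyProfit items W + n * (items.get t).1 := by
  set c := fun i : Fin items.length => (items.get i).1
  set w := fun i : Fin items.length => (items.get i).2
  set g := fun i : Fin items.length => (greedyAssign items W).getD i none
  have hc (i) : 0 < c i := (hpos _ (List.get_mem items i)).1
  have hw (i) : 0 < w i := (hpos _ (List.get_mem items i)).2
  set ρ := c t / w t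
  have hρ0 : 0 ≤ ρ := div_nonneg (hc t).le (hw t).le
  have hρ : ρ * w t = c t := div_mul_cancel₀ _ (hw t).ne'
  have hS : ∑ i with i < t ∧ g i ≠ none, c i ≤ greedyProfit items W := by
    rw [greedyProfit_eq_sum]
    exact sum_le_sum_of_subset_of_nonneg
      (fun i hi => mem_filter.mpr ⟨mem_univ i, (mem_filter.mp hi).2.2⟩) fun i _ _ => (hc i).le
  have hres : ∑ j, W j - ∑ i with i < t ∧ g i ≠ none, w i ≤ n * w t := by
    rw [← filter_filter, ← sum_sum_filter_eq_some, ← sum_sub_distrib]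
    calc ∑ j, (W j - ∑ i ∈ {i | i < t} with g i = some j, w i)
        ≤ ∑ _j : Fin n, w t := sum_le_sum fun j _ => by
          rw [filter_filter]; exact (sub_sum_lt_of_greedyAssign_eq_none items W t ht j).le
      _ = n * w t := by simp
  calc assignProfit items a
      ≤ ∑ i with i < t ∧ g i ≠ none, c i + ρ * (∑ j, W j - ∑ i with i < t ∧ g i ≠ none, w i) := by
        refine sum_le_sum_add_mul_sub_sum hρ0 ?_ ?_ ha.sum_snd_le
        · intro i hi
          simp only [mem_sdiff, mem_filter, mem_univ, true_and, not_and, not_not] at hi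
          have hti : t ≤ i := not_lt.mp fun hit => hfirst i hit hi.1 (hi.2 hit)
          exact (div_le_iff₀ (hw i)).mp (hsorted.antitone hti)
        · intro i hi
          simp only [mem_sdiff, mem_filter, mem_univ, true_and] at hi
          exact (le_div_iff₀ (hw i)).mp (hsorted.antitone hi.1.1.le)
    _ ≤ greedyProfit items W + ρ * (n * w t) := by gcongr
    _ = greedyProfit items W + n * c t := by rw [← hρ]; ring

theorem assignProfit_le_greedyProfit_add_mul {W : Fin n → ℝ} {items : List (ℝ × ℝ)}
    (hpos : ∀ p ∈ items, 0 < p.1 ∧ 0 < p.2) (hsorted : SortedByRatio items)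
    {a : Fin items.length → Option (Fin n)} (ha : FeasibleAssign W items a) {B : ℝ} (hB₀ : 0 ≤ B)
    (hB : ∀ i : Fin items.length, (greedyAssign items W).getD i none = none →
      (∃ j, (items.get i).2 ≤ W j) → (items.get i).1 ≤ B) :
    assignProfit items a ≤ greedyProfit items W + n * B := by
  set g := fun i : Fin items.length => (greedyAssign items W).getD i none
  by_cases hT : (univ.filter fun i => a i ≠ none ∧ g i = none).Nonempty
  · set t := min' _ hT
    obtain ⟨-, hat, hgt⟩ := mem_filter.mp (min'_mem _ hT)
    obtain ⟨j, hj⟩ := Option.ne_none_iff_exists'.mp hat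
    have hfirst : ∀ i < t, a i ≠ none → g i ≠ none := fun i hi hai hgi =>
      (min'_le _ i (mem_filter.mpr ⟨mem_univ i, hai, hgi⟩)).not_gt hi
    calc assignProfit items a
        ≤ greedyProfit items W + n * (items.get t).1 :=
          assignProfit_le_greedyProfit_add_of_first_unassigned hpos hsorted ha hgt hfirst
      _ ≤ greedyProfit items W + n * B := by
          gcongr
          exact hB _ hgt ⟨j, ha.snd_le_of_eq_some (fun p hp => (hpos p hp).2.le) hj⟩
  · have hG : assignProfit items a ≤ greedyProfit items W := by
      refine (greedyProfit_eq_sum items W).symm ▸ sum_le_sum_of_subset_of_nonneg ?_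
        fun i _ _ => (hpos _ (List.get_mem items i)).1.le
      intro i hi
      have hai := (mem_filter.mp hi).2
      exact mem_filter.mpr ⟨mem_univ i, fun hgi => hT ⟨i, mem_filter.mpr ⟨mem_univ i, hai, hgi⟩⟩⟩
    have : 0 ≤ n * B := by positivity
    linarith

theorem stmt4_general (n : ℕ) (W : Fin n → ℝ)
    (items : List (ℝ × ℝ))
    (hpos : ∀ p ∈ items, 0 < p.1 ∧ 0 < p.2)
    (hsorted : SortedByRatio items)
    (opt : ℝ)
    (hopt : IsGreatest {v : ℝ | ∃ a : Fin items.length → Option (Fin n),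
        FeasibleAssign W items a ∧ assignProfit items a = v} opt)
    (best : ℝ)
    (hbest : best = sSup {v : ℝ | ∃ i : Fin items.length,
        (greedyAssign items W).getD i.val none = none ∧
        (∃ j : Fin n, (items.get i).2 ≤ W j) ∧ (items.get i).1 = v}) :
    opt / (n + 1) ≤ max (greedyProfit items W) best := by
  obtain ⟨a, ha, rfl⟩ := hopt.1
  have hbest₀ : 0 ≤ best :=
    hbest ▸ Real.sSup_nonneg fun v ⟨i, _, _, hv⟩ => hv ▸ (hpos _ (List.get_mem items i)).1.le
  have hbest_ge (i : Fin items.length) (hi : (greedyAssign items W).getD i none = none)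
      (hfit : ∃ j, (items.get i).2 ≤ W j) : (items.get i).1 ≤ best := by
    refine hbest ▸ le_csSup ?_ ⟨i, hi, hfit, rfl⟩
    refine ((Set.finite_range fun i : Fin items.length => (items.get i).1).subset ?_).bddAbove
    rintro v ⟨i, -, -, rfl⟩
    exact ⟨i, rfl⟩
  have hbound := assignProfit_le_greedyProfit_add_mul hpos hsorted ha hbest₀ hbest_ge
  rw [div_le_iff₀ (by positivity)]
  calc assignProfit items a ≤ greedyProfit items W + n * best := hbound
    _ ≤ max (greedyProfit items W) best + n * max (greedyProfit items W) best := by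
        gcongr
        exacts [le_max_left _ _, le_max_right _ _]
    _ = max (greedyProfit items W) best * (n + 1) := by ring

/-- Multiple knapsack with `n` knapsacks: the modified greedy algorithm —
the better of the greedy-by-ratio assignment and the single most profitable
item left unassigned by greedy that fits in some knapsack — achieves at
least `1 / (n + 1)` of the optimum total profit. -/
theorem stmt4 (n : ℕ) (hn : 0 < n) (W : Fin n → ℝ) (hWpos : ∀ j, 0 ≤ W j)
    (items : List (ℝ × ℝ))
    (hpos : ∀ p ∈ items, 0 < p.1 ∧ 0 < p.2)
    (hsorted : SortedByRatio items)
    (opt : ℝ)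
    (hopt : IsGreatest {v : ℝ | ∃ a : Fin items.length → Option (Fin n),
        FeasibleAssign W items a ∧ assignProfit items a = v} opt)
    (best : ℝ)
    (hbest : best = sSup {v : ℝ | ∃ i : Fin items.length,
        (greedyAssign items W).getD i.val none = none ∧
        (∃ j : Fin n, (items.get i).2 ≤ W j) ∧ (items.get i).1 = v}) :
    opt / (n + 1) ≤ max (greedyProfit items W) best :=
  stmt4_general n W items hpos hsorted opt hopt best hbest
end
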